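/- For m ≥ 1 and j ≥ 1, g_{k,r}(m+1, overline(kj+r)) = q^{kj+r} · ( g_{k,r}(m, overline(k(j-1)+r)) + ∑_{s=-k+r+1}^{r} g_{k,r}(m, kj+s) ). -/

import Mathlib

noncomputable section

/-- The q-Pochhammer symbol (q^t; q^t)_n as a polynomial in q. -/
def qpoch (t n : ℕ) : Polynomial ℚ :=
  ∏ i ∈ Finset.range n, (1 - Polynomial.X ^ (t * (i + 1)))

/-- The Gaussian binomial coefficient [A choose B] in base q^t:
(q^t;q^t)_A / ((q^t;q^t)_B (q^t;q^t)_{A-B}) when 0 ≤ B ≤ A, and 0 otherwise. -/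
def gauss (t : ℕ) (A B : ℤ) : Polynomial ℚ :=
  if 0 ≤ B ∧ B ≤ A then
    qpoch t A.toNat / (qpoch t B.toNat * qpoch t (A - B).toNat)
  else 0
/-- Formal power series in three variables x/μ = X 0, z/ν = X 1, q = X 2. -/
abbrev S3 := MvPowerSeries (Fin 3) ℚ

/-- Product topology with discrete coefficients, so that infinite sums and
products of power series are meaningful. -/
instance : TopologicalSpace S3 :=
  @Pi.topologicalSpace ((Fin 3) →₀ ℕ) (fun _ => ℚ) (fun _ => ⊥)

/-- Interpret a polynomial in q as a power series in the variable X 2. -/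
def pq (p : Polynomial ℚ) : S3 := Polynomial.aeval (MvPowerSeries.X 2 : S3) p
/-- Linear order on (possibly overlined) parts: 1 < 1̄ < 2 < 2̄ < ⋯ ;
ord (a, false) = 2a, ord (a, true) = 2a + 1. -/
def ord (p : ℕ × Bool) : ℕ := 2 * p.1 + (if p.2 then 1 else 0)

/-- An overpartition as a non-increasing list of (value, overlined?) pairs:
parts positive, non-increasing in the above order (so an overlined part comes
before the equal non-overlined parts), and each value overlined at most once. -/
def IsOverList (l : List (ℕ × Bool)) : Prop :=
  (∀ p ∈ l, 0 < p.1) ∧ l.Pairwise (fun p q => ord q ≤ ord p) ∧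
    ∀ a : ℕ, l.count (a, true) ≤ 1

/-- Number of overlined parts of an overpartition list. -/
def olL (l : List (ℕ × Bool)) : ℕ := (l.filter (fun p => p.2 = true)).length

/-- Weight of an overpartition list. -/
def wtL (l : List (ℕ × Bool)) : ℕ := (l.map Prod.fst).sum
/-- The basis set B_{k,r}(m): overpartitions with m parts, only parts ≡ r
(mod k) overlined, last part ≤ r̄, and for consecutive parts: whenever
λ_{i+1} ≤ kj + r (in the order 1 < 1̄ < 2 < 2̄ < ⋯, for any j ≥ 0) one has
λ_i ≤ overline(kj + r).  (For the unique j ≥ 1 with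
overline(k(j-1)+r) ≤ λ_{i+1} ≤ kj+r this is the binding condition
λ_i ≤ overline(kj+r); the conditions for larger j are implied, and the j = 0
case handles λ_{i+1} ≤ r.) -/
def IsBkr (k r m : ℕ) (l : List (ℕ × Bool)) : Prop :=
  l.length = m ∧ IsOverList l ∧ (∀ p ∈ l, p.2 = true → p.1 % k = r % k) ∧
    (∀ p, l.getLast? = some p → ord p ≤ 2 * r + 1) ∧
    l.Chain' (fun p q => ∀ j : ℕ, ord q ≤ 2 * (k * j + r) → ord p ≤ 2 * (k * j + r) + 1)
open MvPowerSeries in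
/-- g_{k,r}(m, p): the weight generating function (q = X 2) for overpartitions
in B_{k,r}(m) with largest part p (a pair (value, overlined?)). -/
def gkr (k r m : ℕ) (p : ℕ × Bool) : S3 :=
  ∑' l : {l : List (ℕ × Bool) // IsBkr k r m l ∧ l.head? = some p},
    (X 2 : S3) ^ wtL l.1

/-! Deleting the largest part `overline(k(i+1)+r)` of an element of `B_{k,r}(m+1)` leaves an
element of `B_{k,r}(m)` whose largest part `p` satisfies `overline(ki+r) ≤ p < overline(k(i+1)+r)`:
the lower bound is the difference condition at `ki+r`, and the only part in this window that may
be overlined is `overline(ki+r)`, the one that is `≡ r (mod k)`. Conversely every such element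
extends, so the deletion is a bijection lowering the weight by `k(i+1)+r`, and summing over the
finitely many possible second parts gives the recursion. -/

open MvPowerSeries

instance : IsTopologicalSemiring S3 :=
  let : TopologicalSpace ℚ := ⊥
  have : DiscreteTopology ℚ := ⟨rfl⟩
  WithPiTopology.instIsTopologicalSemiring (Fin 3) ℚ

instance : T3Space S3 :=
  let : TopologicalSpace ℚ := ⊥
  have : DiscreteTopology ℚ := ⟨rfl⟩
  inferInstanceAs (T3Space ((Fin 3 →₀ ℕ) → ℚ))

theorem summable_X_pow_of_finite_fibers {ι : Type*} (s : Fin 3) (w : ι → ℕ)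
    (hw : ∀ n, {i | w i = n}.Finite) : Summable fun i => (X s : S3) ^ w i := by
  let : TopologicalSpace ℚ := ⊥
  have : DiscreteTopology ℚ := ⟨rfl⟩
  refine WithPiTopology.summable_iff_summable_coeff.mpr fun d => ?_
  refine summable_of_ne_finset_zero (s := (hw (d s)).toFinset) fun i hi => ?_
  rw [coeff_X_pow, if_neg]
  rintro rfl
  simp at hi

theorem finite_setOf_length_eq_wtL_eq (m n : ℕ) :
    {l : List (ℕ × Bool) | l.length = m ∧ wtL l = n}.Finite := by
  let val : Fin (n + 1) × Bool → ℕ × Bool := fun p => (p.1, p.2)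
  refine ((List.finite_length_eq _ m).image (List.map val)).subset ?_
  rintro l ⟨hlen, hwt⟩
  refine ⟨l.map fun p => (Fin.ofNat (n + 1) p.1, p.2), by simpa using hlen, ?_⟩
  rw [List.map_map]
  refine (List.map_congr_left fun p hp => ?_).trans l.map_id
  have : p.1 ≤ n := hwt ▸ List.le_sum_of_mem (List.mem_map_of_mem hp)
  simp [val, Nat.mod_eq_of_lt (Nat.lt_succ_of_le this)]

theorem summable_X_pow_wtL {P : List (ℕ × Bool) → Prop} {m : ℕ}
    (hP : ∀ l, P l → l.length = m) : Summable fun l : {l // P l} => (X 2 : S3) ^ wtL l.1 :=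
  summable_X_pow_of_finite_fibers 2 _ fun n =>
    ((finite_setOf_length_eq_wtL_eq m n).preimage Subtype.val_injective.injOn).subset
      fun l hl => ⟨hP l.1 l.2, hl⟩

theorem wtL_cons (a : ℕ × Bool) (l : List (ℕ × Bool)) : wtL (a :: l) = a.1 + wtL l := by
  simp [wtL]

theorem ord_overline (n : ℕ) : ord (n, true) = 2 * n + 1 := rfl

theorem ord_plain (n : ℕ) : ord (n, false) = 2 * n := rfl

theorem ord_injective : Function.Injective ord := by
  rintro ⟨a, _ | _⟩ ⟨b, _ | _⟩ h <;>
    simp only [ord_plain, ord_overline, Prod.mk.injEq, and_true] at h ⊢ <;> omega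

theorem mem_cons_iff_eq_of_sorted {a b : ℕ × Bool} {t : List (ℕ × Bool)}
    (hsort : (b :: t).Pairwise fun p q => ord q ≤ ord p) (hba : ord b ≤ ord a) :
    a ∈ b :: t ↔ a = b := by
  refine ⟨fun ha => ord_injective (le_antisymm ?_ hba), fun h => h ▸ List.mem_cons_self⟩
  rcases List.mem_cons.mp ha with rfl | ha
  · exact le_rfl
  · exact List.rel_of_pairwise_cons hsort ha

theorem isOverList_cons_cons_iff {a b : ℕ × Bool} {t : List (ℕ × Bool)} :
    IsOverList (a :: b :: t) ↔
      IsOverList (b :: t) ∧ 0 < a.1 ∧ ord b ≤ ord a ∧ (a.2 = true → b ≠ a) := by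
  constructor
  · rintro ⟨hpos, hsort, hcount⟩
    obtain ⟨hle, hsort'⟩ := List.pairwise_cons.mp hsort
    refine ⟨⟨fun p hp => hpos p (List.mem_cons_of_mem _ hp), hsort',
      fun x => (List.count_le_count_cons ..).trans (hcount x)⟩,
      hpos a List.mem_cons_self, hle b List.mem_cons_self, ?_⟩
    rintro ha rfl
    have := hcount b.1
    simp [← ha] at this
  · rintro ⟨⟨hpos, hsort, hcount⟩, ha, hba, hne⟩
    refine ⟨List.forall_mem_cons.mpr ⟨ha, hpos⟩,
      List.pairwise_cons.mpr ⟨fun q hq => ?_, hsort⟩, fun x => ?_⟩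
    · rcases List.mem_cons.mp hq with rfl | hq
      · exact hba
      · exact (List.rel_of_pairwise_cons hsort hq).trans hba
    · rw [List.count_cons]
      split_ifs with hax
      · obtain rfl : a = (x, true) := by simpa using hax
        have hnot : (x, true) ∉ b :: t := fun hmem =>
          hne rfl ((mem_cons_iff_eq_of_sorted hsort hba).mp hmem).symm
        simp [List.count_eq_zero.mpr hnot]
      · exact hcount x

theorem isBkr_cons_cons_iff {k r m : ℕ} {a b : ℕ × Bool} {t : List (ℕ × Bool)} :
    IsBkr k r (m + 1) (a :: b :: t) ↔
      IsBkr k r m (b :: t) ∧ 0 < a.1 ∧ ord b ≤ ord a ∧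
        (a.2 = true → a.1 % k = r % k ∧ b ≠ a) ∧
        ∀ j, ord b ≤ 2 * (k * j + r) → ord a ≤ 2 * (k * j + r) + 1 := by
  simp only [IsBkr, isOverList_cons_cons_iff, List.length_cons, List.forall_mem_cons,
    List.getLast?_cons_cons, List.Chain', List.isChain_cons_cons, Nat.add_right_cancel_iff]
  tauto

section OverlinedHead

variable {k r i : ℕ}

def secondParts (k r i : ℕ) : Finset (ℕ × Bool) :=
  insert (k * i + r, true) ((Finset.Icc (k * i + r + 1) (k * (i + 1) + r)).image (·, false))

theorem overline_precedes_iff (hk : 0 < k) (b : ℕ × Bool) :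
    (∀ j, ord b ≤ 2 * (k * j + r) → ord (k * (i + 1) + r, true) ≤ 2 * (k * j + r) + 1) ↔
      ord (k * i + r, true) ≤ ord b := by
  simp only [ord_overline]
  constructor
  · intro h
    by_contra! hlt
    have := h i (by omega)
    rw [mul_add_one] at this
    omega
  · intro hb j hj
    have hij : i < j := by
      by_contra! hji
      have := Nat.mul_le_mul_left k hji
      omega
    have : k * (i + 1) ≤ k * j := Nat.mul_le_mul_left k hij
    omega

theorem mem_secondParts_iff (hk : 0 < k) {b : ℕ × Bool} (hb : b.2 = true → b.1 % k = r % k) :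
    b ∈ secondParts k r i ↔
      ord (k * i + r, true) ≤ ord b ∧ ord b ≤ ord (k * (i + 1) + r, true) ∧
        b ≠ (k * (i + 1) + r, true) := by
  obtain ⟨v, _ | _⟩ := b <;>
    simp only [secondParts, Finset.mem_insert, Finset.mem_image, Finset.mem_Icc, Prod.mk.injEq,
      ord_plain, ord_overline, ne_eq, and_true, and_false, or_false, false_or, exists_eq_right,
      Bool.false_eq_true, forall_const, exists_false, mul_add_one, not_false_eq_true] at hb ⊢
  · omega
  · constructor
    · rintro rfl
      omega
    · rintro ⟨hlo, hhi, hne⟩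
      obtain ⟨d, rfl⟩ := Nat.exists_eq_add_of_le (show k * i + r ≤ v by omega)
      have hd : d ≡ 0 [MOD k] :=
        Nat.ModEq.add_left_cancel' (k * i + r) (by simpa [Nat.ModEq, Nat.mul_add_mod] using hb)
      have := hd.eq_of_lt_of_lt (by omega) hk
      omega

theorem isBkr_overline_cons_iff {m : ℕ} (hk : 0 < k) (t : List (ℕ × Bool)) :
    IsBkr k r (m + 1) ((k * (i + 1) + r, true) :: t) ↔
      IsBkr k r m t ∧ ∃ p ∈ secondParts k r i, t.head? = some p := by
  cases t with
  | nil =>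
    have : 0 < k * (i + 1) := Nat.mul_pos hk i.succ_pos
    simp only [IsBkr, List.getLast?_singleton, Option.some.injEq, forall_eq', ord_overline,
      List.head?_nil, reduceCtorEq, and_false, exists_false, iff_false]
    omega
  | cons b t =>
    rw [isBkr_cons_cons_iff, overline_precedes_iff hk]
    simp only [List.head?_cons, Option.some.injEq, exists_eq_right', Nat.mul_add_mod, true_and,
      forall_const]
    refine and_congr_right fun hbt => ?_
    rw [mem_secondParts_iff hk (hbt.2.2.1 b List.mem_cons_self)]
    have : 0 < k * (i + 1) + r := Nat.add_pos_left (Nat.mul_pos hk i.succ_pos) r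
    tauto

def overlineConsEquiv {m : ℕ} (hk : 0 < k) :
    (Σ p : secondParts k r i, {t : List (ℕ × Bool) // IsBkr k r m t ∧ t.head? = some p}) ≃
      {l : List (ℕ × Bool) // IsBkr k r (m + 1) l ∧ l.head? = some (k * (i + 1) + r, true)} :=
  Equiv.ofBijective
    (fun x => ⟨(k * (i + 1) + r, true) :: x.2.1,
      (isBkr_overline_cons_iff hk _).2 ⟨x.2.2.1, x.1, x.1.2, x.2.2.2⟩, rfl⟩)
    (by
      constructor
      · rintro ⟨⟨p, hp⟩, t, ht⟩ ⟨⟨p', hp'⟩, t', ht'⟩ h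
        obtain rfl : t = t' := by simpa using h
        obtain rfl : p = p' := by simpa [ht.2] using ht'.2
        rfl
      · rintro ⟨_ | ⟨a, t⟩, hl, hhead⟩
        · simp at hhead
        · obtain rfl : a = (k * (i + 1) + r, true) := by simpa using hhead
          obtain ⟨ht, p, hp, hhead⟩ := (isBkr_overline_cons_iff hk t).1 hl
          exact ⟨⟨⟨p, hp⟩, t, ht, hhead⟩, rfl⟩)

theorem overlineConsEquiv_apply_coe {m : ℕ} (hk : 0 < k)
    (x : Σ p : secondParts k r i, {t : List (ℕ × Bool) // IsBkr k r m t ∧ t.head? = some p}) :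
    (overlineConsEquiv hk x).1 = (k * (i + 1) + r, true) :: x.2.1 :=
  rfl

theorem gkr_succ_overline {m : ℕ} (hk : 0 < k) :
    gkr k r (m + 1) (k * (i + 1) + r, true) =
      (X 2 : S3) ^ (k * (i + 1) + r) * ∑ p ∈ secondParts k r i, gkr k r m p := by
  set c := k * (i + 1) + r
  have hterm (x : Σ p : secondParts k r i, {t // IsBkr k r m t ∧ t.head? = some p}) :
      (X 2 : S3) ^ wtL (overlineConsEquiv hk x).1 = (X 2 : S3) ^ c * (X 2 : S3) ^ wtL x.2.1 := by
    rw [overlineConsEquiv_apply_coe, wtL_cons, pow_add]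
  have hfiber (p : secondParts k r i) : Summable fun t : {t // IsBkr k r m t ∧ t.head? = some p} =>
      (X 2 : S3) ^ wtL t.1 :=
    summable_X_pow_wtL fun t ht => ht.1.1
  have hsigma : Summable
      fun x : (Σ p : secondParts k r i, {t // IsBkr k r m t ∧ t.head? = some p}) =>
        (X 2 : S3) ^ c * (X 2 : S3) ^ wtL x.2.1 :=
    ((overlineConsEquiv hk).summable_iff.mpr (summable_X_pow_wtL fun l hl => hl.1.1)).congr hterm
  calc gkr k r (m + 1) (c, true)
      = ∑' x : (Σ p : secondParts k r i, {t // IsBkr k r m t ∧ t.head? = some p}),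
          (X 2 : S3) ^ c * (X 2 : S3) ^ wtL x.2.1 := by
        rw [gkr, ← (overlineConsEquiv hk).tsum_eq]
        exact tsum_congr hterm
    _ = ∑' p : secondParts k r i, (X 2 : S3) ^ c * gkr k r m p := by
        have hfiber_mul (p : secondParts k r i) := (hfiber p).mul_left ((X 2 : S3) ^ c)
        refine (hsigma.tsum_sigma' hfiber_mul).trans (tsum_congr fun p => ?_)
        exact (hfiber p).tsum_mul_left _
    _ = (X 2 : S3) ^ c * ∑ p ∈ secondParts k r i, gkr k r m p := by
        rw [Finset.tsum_subtype (secondParts k r i) fun p => (X 2 : S3) ^ c * gkr k r m p,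
          Finset.mul_sum]

end OverlinedHead

open MvPowerSeries in
theorem stmt14_general (k r m j : ℕ) (hr : 1 ≤ r) (hrk : r ≤ k) (hj : 1 ≤ j) :
    gkr k r (m + 1) (k * j + r, true) =
      (X 2 : S3) ^ (k * j + r) *
        (gkr k r m (k * (j - 1) + r, true) +
          ∑ v ∈ Finset.Icc (k * (j - 1) + r + 1) (k * j + r), gkr k r m (v, false)) := by
  obtain ⟨i, rfl⟩ := Nat.exists_eq_add_of_le' hj
  rw [Nat.add_sub_cancel, gkr_succ_overline (hr.trans hrk), secondParts,
    Finset.sum_insert (by simp), Finset.sum_image (by simp)]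

open MvPowerSeries in
/-- for m ≥ 1 and j ≥ 1,
g_{k,r}(m+1, overline(kj+r)) = q^{kj+r} · ( g_{k,r}(m, overline(k(j-1)+r))
  + ∑_{s=-k+r+1}^{r} g_{k,r}(m, kj+s) ). -/
theorem stmt14 (k r m j : ℕ) (hr : 1 ≤ r) (hrk : r ≤ k) (hm : 1 ≤ m)
    (hj : 1 ≤ j) :
    gkr k r (m + 1) (k * j + r, true) =
      (X 2 : S3) ^ (k * j + r) *
        (gkr k r m (k * (j - 1) + r, true) +
          ∑ v ∈ Finset.Icc (k * (j - 1) + r + 1) (k * j + r), gkr k r m (v, false)) :=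
  stmt14_general k r m j hr hrk hj
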